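/- Let ω₁ ≤ δ < κ, let CK_κ = Col(ω₁, <κ) × K_κ with componentwise order, and let CK_δ = {(f, p) ∈ CK_κ : dom f ⊆ δ × ω₁ and dom b_p ⊆ δ}. Then the map π : CK_κ → CK_δ defined by π(f, (t, b)) = (f ↾ (δ × ω₁), (t, b ↾ δ)) is a projection: (i) it is order-preserving; and (ii) for every p ∈ CK_κ and every q ∈ CK_δ with q ≤ π(p), there exists p* ∈ CK_κ with p* ≤ p and π(p*) ≤ q. -/

import Mathlib

noncomputable section

/-- The first uncountable ordinal. -/
def omega1 : Ordinal.{0} := (Cardinal.aleph 1).ord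

/-- Restriction of (the graph of) a partial function on ordinals to arguments below `γ`. -/
def nodeRestrict (s : Set (Ordinal.{0} × Ordinal.{0})) (γ : Ordinal.{0}) :
    Set (Ordinal.{0} × Ordinal.{0}) :=
  {p ∈ s | p.1 < γ}

/-- `s` is (the graph of) a function with domain the ordinal `β` and values in `ω₁`. -/
def IsFuncOn (s : Set (Ordinal.{0} × Ordinal.{0})) (β : Ordinal.{0}) : Prop :=
  (∀ p ∈ s, p.1 < β ∧ p.2 < omega1) ∧ ∀ γ < β, ∃! v : Ordinal.{0}, (γ, v) ∈ s

/-- A Jech condition: a pair `(t, b)` where `t` is a countable initial segment of an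
`ω₁`-tree of sequences with a maximal level `α`, closed under restriction, with all
levels below `α` nonempty and every node extending to the top level; and `b` is a
function (given by its graph) from a countable subset of `κ` into the top level of `t`. -/
structure JechCond (κ : Cardinal.{0}) where
  α : Ordinal.{0}
  t : Set (Set (Ordinal.{0} × Ordinal.{0}))
  b : Set (Ordinal.{0} × Set (Ordinal.{0} × Ordinal.{0}))
  hα : α < omega1
  ht_count : t.Countable
  ht_fun : ∀ s ∈ t, ∃ β ≤ α, IsFuncOn s β
  ht_closed : ∀ s ∈ t, ∀ γ : Ordinal.{0}, nodeRestrict s γ ∈ t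
  ht_levels : ∀ β < α, ∃ s ∈ t, IsFuncOn s β
  ht_top_ext : ∀ s ∈ t, ∃ s' ∈ t, IsFuncOn s' α ∧ s ⊆ s'
  hb_fun : ∀ x ∈ b, ∀ y ∈ b, x.1 = y.1 → x = y
  hb_count : (Prod.fst '' b).Countable
  hb_dom : ∀ x ∈ b, x.1 < κ.ord
  hb_val : ∀ x ∈ b, x.2 ∈ t ∧ IsFuncOn x.2 α

/-- The order on `K_κ`: `p ≤ q` iff `α_q ≤ α_p`, `t_q` is the part of `t_p` of levels
`≤ α_q`, `dom b_q ⊆ dom b_p` and `b_q(γ) = b_p(γ) ↾ α_q` for every `γ ∈ dom b_q`. -/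
def JechLE {κ : Cardinal.{0}} (p q : JechCond κ) : Prop :=
  q.α ≤ p.α ∧
  q.t = {s ∈ p.t | ∃ β ≤ q.α, IsFuncOn s β} ∧
  ∀ x ∈ q.b, ∃ y ∈ p.b, x.1 = y.1 ∧ x.2 = nodeRestrict y.2 q.α

/-- A condition of the Levy collapse `Col(ω₁, <κ)`: the graph of a function with
countable domain contained in `κ × ω₁`, values in `κ`, and `f(μ, α) < μ` whenever
`μ > 0`. -/
structure LevyCond (κ : Cardinal.{0}) where
  f : Set ((Ordinal.{0} × Ordinal.{0}) × Ordinal.{0})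
  hfun : ∀ x ∈ f, ∀ y ∈ f, x.1 = y.1 → x = y
  hcount : f.Countable
  hdom : ∀ x ∈ f, x.1.1 < κ.ord ∧ x.1.2 < omega1
  hval : ∀ x ∈ f, x.2 < κ.ord ∧ (0 < x.1.1 → x.2 < x.1.1)

/-- The order on the Levy collapse: reverse inclusion. -/
def LevyLE {κ : Cardinal.{0}} (p q : LevyCond κ) : Prop := q.f ⊆ p.f

/-- The componentwise order on the product `CK_κ = Col(ω₁, <κ) × K_κ`. -/
def CKLE {κ : Cardinal.{0}} (p q : LevyCond κ × JechCond κ) : Prop :=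
  LevyLE p.1 q.1 ∧ JechLE p.2 q.2

/-- Restriction of a Jech condition: `(t, b) ↦ (t, b ↾ δ)`, where `b ↾ δ` is the
restriction of `b` to `{γ ∈ dom b : γ < δ}`. -/
def JechCond.restrictB {κ : Cardinal.{0}} (p : JechCond κ) (δ : Ordinal.{0}) :
    JechCond κ where
  α := p.α
  t := p.t
  b := {x ∈ p.b | x.1 < δ}
  hα := p.hα
  ht_count := p.ht_count
  ht_fun := p.ht_fun
  ht_closed := p.ht_closed
  ht_levels := p.ht_levels
  ht_top_ext := p.ht_top_ext
  hb_fun := fun x hx y hy h => p.hb_fun x hx.1 y hy.1 h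
  hb_count := p.hb_count.mono (Set.image_mono fun x hx => hx.1)
  hb_dom := fun x hx => p.hb_dom x hx.1
  hb_val := fun x hx => p.hb_val x hx.1

/-- Restriction of a Levy condition: `f ↦ f ↾ (δ × ω₁)`, the restriction of `f` to
`{(μ, α) ∈ dom f : μ < δ}`. -/
def LevyCond.restrict {κ : Cardinal.{0}} (p : LevyCond κ) (δ : Ordinal.{0}) :
    LevyCond κ where
  f := {x ∈ p.f | x.1.1 < δ}
  hfun := fun x hx y hy h => p.hfun x hx.1 y hy.1 h
  hcount := p.hcount.mono fun x hx => hx.1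
  hdom := fun x hx => p.hdom x hx.1
  hval := fun x hx => p.hval x hx.1

/-- The projection `π : CK_κ → CK_δ`. -/
def CKRestrict {κ : Cardinal.{0}} (p : LevyCond κ × JechCond κ) (δ : Ordinal.{0}) :
    LevyCond κ × JechCond κ :=
  (p.1.restrict δ, p.2.restrictB δ)

/-- Membership in `CK_δ = {(f, p) ∈ CK_κ : dom f ⊆ δ × ω₁ ∧ dom b_p ⊆ δ}`. -/
def InCKδ {κ : Cardinal.{0}} (δ : Ordinal.{0}) (p : LevyCond κ × JechCond κ) : Prop :=
  (∀ x ∈ p.1.f, x.1.1 < δ) ∧ ∀ x ∈ p.2.b, x.1 < δ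

lemma funOn_restrict_eq {s s' : Set (Ordinal.{0} × Ordinal.{0})} {β β' : Ordinal.{0}}
    (hs : IsFuncOn s β) (hs' : IsFuncOn s' β') (hsub : s ⊆ s') :
    nodeRestrict s' β = s := by
  ext ⟨γ, v⟩
  constructor
  · rintro ⟨hmem, hlt⟩
    obtain ⟨v0, hv0, _⟩ := hs.2 γ hlt
    obtain ⟨w, _, huw⟩ := hs'.2 γ (hs'.1 _ hmem).1
    have h1 : v = w := huw v hmem
    have h2 : v0 = w := huw v0 (hsub hv0)
    rw [h1, ← h2]; exact hv0
  · intro hmem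
    exact ⟨hsub hmem, (hs.1 _ hmem).1⟩

lemma nodeRestrict_self_of {s : Set (Ordinal.{0} × Ordinal.{0})} {β γ : Ordinal.{0}}
    (h : IsFuncOn s β) (hβγ : β ≤ γ) : nodeRestrict s γ = s := by
  ext p
  exact ⟨fun hp => hp.1, fun hp => ⟨hp, lt_of_lt_of_le (h.1 p hp).1 hβγ⟩⟩

/-- For `ω₁ ≤ δ < κ`, the map `π(f, (t, b)) = (f ↾ (δ × ω₁), (t, b ↾ δ))` is a
projection from `CK_κ` onto `CK_δ`: it is order-preserving, and whenever `q ∈ CK_δ`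
with `q ≤ π(p)` there is `p* ≤ p` in `CK_κ` with `π(p*) ≤ q`. -/
theorem ck_restrict_is_projection (κ : Cardinal.{0}) (hreg : κ.IsRegular)
    (hκ : Cardinal.aleph 2 ≤ κ) (δ : Ordinal.{0})
    (hδ₁ : omega1 ≤ δ) (hδ₂ : δ < κ.ord) :
    (∀ p q : LevyCond κ × JechCond κ, CKLE p q → CKLE (CKRestrict p δ) (CKRestrict q δ)) ∧
    (∀ p q : LevyCond κ × JechCond κ, InCKδ δ q → CKLE q (CKRestrict p δ) →
      ∃ pstar : LevyCond κ × JechCond κ,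
        CKLE pstar p ∧ CKLE (CKRestrict pstar δ) q) := by
  constructor
  · rintro p q ⟨h1, h2, h3, h4⟩
    refine ⟨fun x hx => ⟨h1 hx.1, hx.2⟩, h2, h3, ?_⟩
    rintro x ⟨hxq, hxδ⟩
    obtain ⟨y, hy, hxy1, hxy2⟩ := h4 x hxq
    exact ⟨y, ⟨hy, hxy1 ▸ hxδ⟩, hxy1, hxy2⟩
  · rintro p q hqδ ⟨hL, hJα, hJt, hJb⟩
    have hJt' : p.2.t = {s ∈ q.2.t | ∃ β ≤ p.2.α, IsFuncOn s β} := hJt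
    have hext : ∀ x : Ordinal.{0} × Set (Ordinal.{0} × Ordinal.{0}), ∃ s',
        x ∈ p.2.b → s' ∈ q.2.t ∧ IsFuncOn s' q.2.α ∧ x.2 ⊆ s' := by
      intro x
      by_cases hx : x ∈ p.2.b
      · have hx2 : x.2 ∈ p.2.t := (p.2.hb_val x hx).1
        rw [hJt'] at hx2
        obtain ⟨s', hs', hs'f, hs'sub⟩ := q.2.ht_top_ext x.2 hx2.1
        exact ⟨s', fun _ => ⟨hs', hs'f, hs'sub⟩⟩
      · exact ⟨∅, fun h => absurd h hx⟩
    choose E hE using hext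
    -- Levy part of pstar
    refine ⟨(⟨q.1.f ∪ {x ∈ p.1.f | δ ≤ x.1.1}, ?_, ?_, ?_, ?_⟩,
      ⟨q.2.α, q.2.t, q.2.b ∪ (fun x => (x.1, E x)) '' {x ∈ p.2.b | δ ≤ x.1},
       q.2.hα, q.2.ht_count, q.2.ht_fun, q.2.ht_closed, q.2.ht_levels, q.2.ht_top_ext,
       ?_, ?_, ?_, ?_⟩), ?_, ?_⟩
    · -- hfun for levy union
      rintro x (hx | hx) y (hy | hy) hxy
      · exact q.1.hfun x hx y hy hxy
      · exact absurd (hxy ▸ congrArg Prod.fst hxy ▸ (hqδ.1 x hx))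
          (not_lt.mpr (by rw [congrArg Prod.fst hxy]; exact hy.2))
      · exact absurd (hqδ.1 y hy) (not_lt.mpr (by rw [← congrArg Prod.fst hxy]; exact hx.2))
      · exact p.1.hfun x hx.1 y hy.1 hxy
    · exact q.1.hcount.union (p.1.hcount.mono fun x hx => hx.1)
    · rintro x (hx | hx)
      · exact q.1.hdom x hx
      · exact p.1.hdom x hx.1
    · rintro x (hx | hx)
      · exact q.1.hval x hx
      · exact p.1.hval x hx.1
    · -- hb_fun for jech union
      rintro x hx y hy hxy
      rcases hx with hx | ⟨x0, hx0, rfl⟩ <;> rcases hy with hy | ⟨y0, hy0, rfl⟩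
      · exact q.2.hb_fun x hx y hy hxy
      · exact absurd (hqδ.2 x hx) (not_lt.mpr (by rw [hxy]; exact hy0.2))
      · exact absurd (hqδ.2 y hy) (not_lt.mpr (by rw [← hxy]; exact hx0.2))
      · have : x0 = y0 := p.2.hb_fun x0 hx0.1 y0 hy0.1 hxy
        rw [this]
    · -- hb_count
      rw [Set.image_union, ← Set.image_comp]
      refine q.2.hb_count.union (Set.Countable.mono ?_ p.2.hb_count)
      rintro a ⟨x, hx, rfl⟩
      exact ⟨x, hx.1, rfl⟩
    · -- hb_dom
      rintro x (hx | ⟨x0, hx0, rfl⟩)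
      · exact q.2.hb_dom x hx
      · exact p.2.hb_dom x0 hx0.1
    · -- hb_val
      rintro x (hx | ⟨x0, hx0, rfl⟩)
      · exact q.2.hb_val x hx
      · exact ⟨(hE x0 hx0.1).1, (hE x0 hx0.1).2.1⟩
    · -- CKLE pstar p
      refine ⟨?_, hJα, hJt', ?_⟩
      · intro x hx
        by_cases hxδ : x.1.1 < δ
        · exact Or.inl (hL ⟨hx, hxδ⟩)
        · exact Or.inr ⟨hx, not_lt.mp hxδ⟩
      · intro x hx
        by_cases hxδ : x.1 < δ
        · obtain ⟨y, hy, hxy1, hxy2⟩ := hJb x ⟨hx, hxδ⟩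
          exact ⟨y, Or.inl hy, hxy1, hxy2⟩
        · refine ⟨(x.1, E x), Or.inr ⟨x, ⟨hx, not_lt.mp hxδ⟩, rfl⟩, rfl, ?_⟩
          exact (funOn_restrict_eq (p.2.hb_val x hx).2 (hE x hx).2.1 (hE x hx).2.2).symm
    · -- CKLE (restrict pstar) q
      refine ⟨?_, le_refl _, ?_, ?_⟩
      · intro x hx
        exact ⟨Or.inl hx, hqδ.1 x hx⟩
      · ext s
        exact ⟨fun hs => ⟨hs, (q.2.ht_fun s hs)⟩, fun hs => hs.1⟩
      · intro x hx
        refine ⟨x, ⟨Or.inl hx, hqδ.2 x hx⟩, rfl, ?_⟩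
        exact (nodeRestrict_self_of (q.2.hb_val x hx).2 (le_refl _)).symm

end
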